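/- Let γ = γ_{1,3}^{-1/2}, i.e. γ(t) = (3/2)·exp(2πi t) + (1/2)·exp(6πi t). Then the unit tangent vector γ'(t)/|γ'(t)| tends to i as t → 1/4 from the right, and tends to -i as t → 1/4 from the left. In particular the two one-sided unit tangent limits at t = 1/4 are opposite, so t = 1/4 is a cusp point of γ. -/

import Mathlib

/-!
Differentiating, `γ'(t) = 3πi (e^{2πit} + e^{6πit}) = 6π cos(2πt) · i e^{4πit}`: the derivative is
the real multiple `6π cos(2πt)` of the unit vector `i e^{4πit}`. The unit tangent is therefore
`± i e^{4πit}`, the sign being that of `cos(2πt)`, which changes from `+` to `-` at `t = 1/4`,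
where `i e^{4πit} = -i`.
-/

open Filter Topology

/-- The curve `γ_{1,3}^{-1/2}(t) = (3/2)·exp(2πi t) + (1/2)·exp(6πi t)`. -/
noncomputable def gammaSpecial (t : ℝ) : ℂ :=
  (3/2 : ℂ) * Complex.exp (2 * Real.pi * Complex.I * t) +
    (1/2 : ℂ) * Complex.exp (2 * Real.pi * Complex.I * 3 * t)

open Complex Real

lemma Complex.ofReal_mul_div_norm_of_pos {r : ℝ} (hr : 0 < r) (z : ℂ) :
    r * z / (‖(r : ℂ) * z‖ : ℂ) = z / ‖z‖ := by
  rw [norm_mul, norm_real, Real.norm_of_nonneg hr.le, ofReal_mul]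
  exact mul_div_mul_left z _ (ofReal_ne_zero.mpr hr.ne')

lemma Complex.ofReal_mul_div_norm_of_neg {r : ℝ} (hr : r < 0) (z : ℂ) :
    r * z / (‖(r : ℂ) * z‖ : ℂ) = -(z / ‖z‖) := by
  have h := ofReal_mul_div_norm_of_pos (neg_pos.mpr hr) z
  rw [ofReal_neg, neg_mul, norm_neg, neg_div] at h
  exact neg_eq_iff_eq_neg.mp h

lemma Complex.exp_add_mul_I_add_exp_sub_mul_I (x y : ℂ) :
    exp (x + y * I) + exp (x - y * I) = 2 * cos y * exp x := by
  rw [two_cos, exp_add, sub_eq_add_neg, exp_add, ← neg_mul]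
  ring

lemma hasDerivAt_cexp_ofReal_mul (c : ℂ) (t : ℝ) :
    HasDerivAt (fun t : ℝ => exp (c * t)) (c * exp (c * t)) t := by
  simpa [mul_comm] using (((hasDerivAt_id t).ofReal_comp).const_mul c).cexp

noncomputable def gammaSpecialDir (t : ℝ) : ℂ :=
  I * exp (4 * π * I * t)

lemma norm_gammaSpecialDir (t : ℝ) : ‖gammaSpecialDir t‖ = 1 := by
  rw [gammaSpecialDir, norm_mul, norm_I, one_mul, show 4 * π * I * t = (4 * π * t : ℝ) * I by
    push_cast; ring, norm_exp_ofReal_mul_I]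

lemma continuous_gammaSpecialDir : Continuous gammaSpecialDir := by
  unfold gammaSpecialDir
  fun_prop

lemma gammaSpecialDir_one_fourth : gammaSpecialDir (1/4) = -I := by
  rw [gammaSpecialDir, show 4 * π * I * ((1/4 : ℝ) : ℂ) = π * I by push_cast; ring, exp_pi_mul_I]
  ring

lemma hasDerivAt_gammaSpecial (t : ℝ) :
    HasDerivAt gammaSpecial ((6 * π * Real.cos (2 * π * t) : ℝ) * gammaSpecialDir t) t := by
  refine HasDerivAt.congr_deriv (f := gammaSpecial)
    (((hasDerivAt_cexp_ofReal_mul (2 * π * I) t).const_mul (3/2 : ℂ)).add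
      ((hasDerivAt_cexp_ofReal_mul (2 * π * I * 3) t).const_mul (1/2 : ℂ))) ?_
  have hsum := exp_add_mul_I_add_exp_sub_mul_I (4 * π * I * t) (2 * π * t)
  rw [show 4 * π * I * t + 2 * π * t * I = 2 * π * I * 3 * t by ring,
    show 4 * π * I * t - 2 * π * t * I = 2 * π * I * t by ring] at hsum
  rw [gammaSpecialDir]
  push_cast
  linear_combination (3 * π * I) * hsum

lemma deriv_gammaSpecial (t : ℝ) :
    deriv gammaSpecial t = (6 * π * Real.cos (2 * π * t) : ℝ) * gammaSpecialDir t :=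
  (hasDerivAt_gammaSpecial t).deriv

lemma deriv_gammaSpecial_div_norm_of_cos_pos {t : ℝ} (h : 0 < Real.cos (2 * π * t)) :
    deriv gammaSpecial t / (‖deriv gammaSpecial t‖ : ℂ) = gammaSpecialDir t := by
  rw [deriv_gammaSpecial, ofReal_mul_div_norm_of_pos (by positivity), norm_gammaSpecialDir,
    ofReal_one, div_one]

lemma deriv_gammaSpecial_div_norm_of_cos_neg {t : ℝ} (h : Real.cos (2 * π * t) < 0) :
    deriv gammaSpecial t / (‖deriv gammaSpecial t‖ : ℂ) = -gammaSpecialDir t := by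
  have hr : 6 * π * Real.cos (2 * π * t) < 0 := mul_neg_of_pos_of_neg (by positivity) h
  rw [deriv_gammaSpecial, ofReal_mul_div_norm_of_neg hr, norm_gammaSpecialDir, ofReal_one,
    div_one]

lemma Real.cos_two_pi_mul_pos {t : ℝ} (ht : t ∈ Set.Ioo (-(1/4)) (1/4)) :
    0 < Real.cos (2 * π * t) :=
  cos_pos_of_mem_Ioo ⟨by nlinarith [ht.1, pi_pos], by nlinarith [ht.2, pi_pos]⟩

lemma Real.cos_two_pi_mul_neg {t : ℝ} (ht : t ∈ Set.Ioo (1/4) (3/4)) :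
    Real.cos (2 * π * t) < 0 :=
  cos_neg_of_pi_div_two_lt_of_lt (by nlinarith [ht.1, pi_pos]) (by nlinarith [ht.2, pi_pos])

/-- The unit tangent vector of `γ_{1,3}^{-1/2}` tends to `i` as `t → (1/4)⁺` and to `-i` as
`t → (1/4)⁻`: the two one-sided unit tangent limits are opposite, so `t = 1/4` is a cusp. -/
theorem gamma_cusp_at_quarter :
    Tendsto (fun t : ℝ => deriv gammaSpecial t / (‖deriv gammaSpecial t‖ : ℂ))
        (𝓝[>] (1/4 : ℝ)) (𝓝 Complex.I) ∧
      Tendsto (fun t : ℝ => deriv gammaSpecial t / (‖deriv gammaSpecial t‖ : ℂ))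
        (𝓝[<] (1/4 : ℝ)) (𝓝 (-Complex.I)) := by
  have hdir : Tendsto gammaSpecialDir (𝓝 (1/4)) (𝓝 (-I)) :=
    gammaSpecialDir_one_fourth ▸ continuous_gammaSpecialDir.tendsto (1/4)
  constructor
  · refine (neg_neg I ▸ hdir.neg.mono_left nhdsWithin_le_nhds).congr' ?_
    filter_upwards [Ioo_mem_nhdsGT (show (1/4 : ℝ) < 3/4 by norm_num)] with t ht
    exact (deriv_gammaSpecial_div_norm_of_cos_neg (cos_two_pi_mul_neg ht)).symm
  · refine (hdir.mono_left nhdsWithin_le_nhds).congr' ?_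
    filter_upwards [Ioo_mem_nhdsLT (show -(1/4 : ℝ) < 1/4 by norm_num)] with t ht
    exact (deriv_gammaSpecial_div_norm_of_cos_pos (cos_two_pi_mul_pos ht)).symm
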